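/- arXiv:math/0004109 — 5 statements merged into one kernel-verified Lean document; each statement's English description precedes it below -/
import Mathlib

section
/- Let Δ be a finite set of rational strongly convex polyhedral cones in ℝⁿ forming a complete simplicial fan with the property: for every cone σ ∈ Δ with primitive ray generators forming part of a ℤ-basis, and for every maximal cone μ = ⟨ρ₁,…,ρ_n⟩ ∈ Δ, every ray generator ρ of Δ written as ρ = b₁ρ₁+⋯+b_nρ_n satisfies −1 ≤ b_j ≤ 1 with b_j = 1 for at most one j. Then for every maximal cone μ, the functional φ_μ with φ_μ(ρ_i)=1 on the generators of μ satisfies φ_μ(ρ) ≤ 1 for every ray generator ρ of Δ, with equality exactly when ρ is a generator of μ. -/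
/-- A complete nonsingular (simplicial) fan in ℤⁿ, described combinatorially:
cones are recorded by their (finite) sets of primitive ray generators. -/
structure CompleteNonsingFan (n : ℕ) where
  rays : Finset (Fin n → ℤ)
  cones : Finset (Finset (Fin n → ℤ))
  empty_mem : ∅ ∈ cones
  singleton_mem : ∀ ρ ∈ rays, {ρ} ∈ cones
  cone_rays : ∀ σ ∈ cones, σ ⊆ rays
  face_mem : ∀ σ ∈ cones, ∀ τ ⊆ σ, τ ∈ cones
  /-- nonsingularity: the generators of every cone form part of a ℤ-basis of ℤⁿ -/
  nonsingular : ∀ σ ∈ cones, ∃ b : Module.Basis (Fin n) ℤ (Fin n → ℤ),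
      (σ : Set (Fin n → ℤ)) ⊆ Set.range ⇑b
  /-- completeness: every point of ℝⁿ lies in some cone -/
  complete : ∀ x : Fin n → ℝ, ∃ σ ∈ cones, ∃ c : (Fin n → ℤ) → ℝ,
      (∀ v, 0 ≤ c v) ∧ x = ∑ v ∈ σ, c v • (fun i => (v i : ℝ))

/-- A primitive set: a set of rays not spanning a cone, every proper subset of
which spans a cone. -/
def IsPrimitiveSet {n : ℕ} (F : CompleteNonsingFan n) (P : Finset (Fin n → ℤ)) : Prop :=
  P ⊆ F.rays ∧ P ∉ F.cones ∧ ∀ ρ ∈ P, P.erase ρ ∈ F.cones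

/-!
Write a ray generator `ρ` in the basis `μ` as `ρ = ∑ b v • v`, so that `φ_μ ρ = ∑ b v`.
An integer `k ≤ 1` is bounded by the indicator of `k = 1`, so the sum is at most the number of
coefficients equal to `1`, which is at most `1`. Equality forces every coefficient to equal its
indicator, with exactly one of them `1`, i.e. `ρ ∈ μ`.
-/

open Finset

theorem Module.Basis.exists_eq_sum_smul_of_subset_range {ι R M : Type*} [Fintype ι] [Semiring R]
    [AddCommMonoid M] [Module R M] (e : Module.Basis ι R M) {μ : Finset M}
    (hμ : (μ : Set M) ⊆ Set.range e) (hcard : #μ = Fintype.card ι) (x : M) :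
    ∃ c : M → R, x = ∑ v ∈ μ, c v • v := by
  classical
  have hμ_eq : μ = univ.image e := by
    refine eq_of_subset_of_card_le (fun v hv => ?_) ?_
    · obtain ⟨i, rfl⟩ := hμ hv
      exact mem_image_of_mem e (mem_univ i)
    · exact card_image_le.trans (by rw [card_univ, hcard])
  have hx : x ∈ Submodule.span R (μ : Set M) := by
    rw [hμ_eq, coe_image, coe_univ, Set.image_univ, e.span_eq]
    exact Submodule.mem_top
  obtain ⟨c, -, hc⟩ := Submodule.mem_span_finset.1 hx
  exact ⟨c, hc.symm⟩

section CoefficientsAtMostOne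

variable {α : Type*} {s : Finset α} {b : α → ℤ}

theorem Int.le_ite_eq_one {k : ℤ} (hk : k ≤ 1) : k ≤ if k = 1 then 1 else 0 := by
  split_ifs <;> omega

theorem Finset.sum_le_card_filter_eq_one (hle : ∀ v ∈ s, b v ≤ 1) :
    ∑ v ∈ s, b v ≤ #{v ∈ s | b v = 1} := by
  rw [← sum_boole]
  exact sum_le_sum fun v hv => Int.le_ite_eq_one (hle v hv)

theorem Finset.card_filter_eq_one_le_one
    (huniq : ∀ v ∈ s, ∀ w ∈ s, b v = 1 → b w = 1 → v = w) : #{v ∈ s | b v = 1} ≤ 1 :=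
  card_le_one.2 fun v hv w hw => by
    rw [mem_filter] at hv hw
    exact huniq v hv.1 w hw.1 hv.2 hw.2

theorem Finset.sum_le_one_of_le_one (hle : ∀ v ∈ s, b v ≤ 1)
    (huniq : ∀ v ∈ s, ∀ w ∈ s, b v = 1 → b w = 1 → v = w) :
    ∑ v ∈ s, b v ≤ 1 :=
  (sum_le_card_filter_eq_one hle).trans (by exact_mod_cast card_filter_eq_one_le_one huniq)

theorem Finset.exists_eq_ite_of_sum_eq_one [DecidableEq α] (hle : ∀ v ∈ s, b v ≤ 1)
    (huniq : ∀ v ∈ s, ∀ w ∈ s, b v = 1 → b w = 1 → v = w) (hsum : ∑ v ∈ s, b v = 1) :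
    ∃ v₀ ∈ s, ∀ v ∈ s, b v = if v = v₀ then 1 else 0 := by
  have hcard : #{v ∈ s | b v = 1} = 1 := by
    have := sum_le_card_filter_eq_one hle
    have := card_filter_eq_one_le_one huniq
    omega
  have hb01 : ∀ v ∈ s, b v = if b v = 1 then 1 else 0 := by
    refine (sum_eq_sum_iff_of_le fun v hv => Int.le_ite_eq_one (hle v hv)).1 ?_
    rw [sum_boole, hcard, hsum, Nat.cast_one]
  obtain ⟨v₀, hv₀⟩ := card_eq_one.1 hcard
  have hone_iff : ∀ v ∈ s, b v = 1 ↔ v = v₀ := fun v hv => by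
    rw [← mem_singleton (a := v₀), ← hv₀, mem_filter, and_iff_right hv]
  have hv₀s : v₀ ∈ s := (mem_filter.1 (hv₀ ▸ mem_singleton_self v₀)).1
  refine ⟨v₀, hv₀s, fun v hv => ?_⟩
  rw [hb01 v hv]
  exact if_congr (hone_iff v hv) rfl rfl

end CoefficientsAtMostOne

/-- if for every maximal cone μ every ray generator has coordinates
in {−1,0,1} with at most one coordinate +1 (condition (iii)), then for every
maximal cone μ the functional φ_μ with φ_μ = 1 on the generators of μ satisfies
φ_μ(ρ) ≤ 1 on all ray generators, with equality exactly for the generators of μ. -/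
theorem stmt_4 (n : ℕ) (F : CompleteNonsingFan n)
    (hiii : ∀ μ ∈ F.cones, μ.card = n → ∀ ρ ∈ F.rays, ∀ b : (Fin n → ℤ) → ℤ,
        ρ = ∑ v ∈ μ, b v • v →
        (∀ v ∈ μ, -1 ≤ b v ∧ b v ≤ 1) ∧
        (∀ v ∈ μ, ∀ w ∈ μ, b v = 1 → b w = 1 → v = w)) :
    ∀ μ ∈ F.cones, μ.card = n → ∀ φ : (Fin n → ℤ) →ₗ[ℤ] ℤ, (∀ v ∈ μ, φ v = 1) →
      ∀ ρ ∈ F.rays, φ ρ ≤ 1 ∧ (φ ρ = 1 ↔ ρ ∈ μ) := by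
  classical
  intro μ hμ hcard φ hφ ρ hρ
  obtain ⟨e, he⟩ := F.nonsingular μ hμ
  obtain ⟨b, hρb⟩ := e.exists_eq_sum_smul_of_subset_range he (by simpa using hcard) ρ
  obtain ⟨hbound, huniq⟩ := hiii μ hμ hcard ρ hρ b hρb
  have hle : ∀ v ∈ μ, b v ≤ 1 := fun v hv => (hbound v hv).2
  have hφρ : φ ρ = ∑ v ∈ μ, b v := by
    rw [hρb, map_sum]
    exact sum_congr rfl fun v hv => by rw [map_smul, hφ v hv, smul_eq_mul, mul_one]
  refine ⟨hφρ ▸ sum_le_one_of_le_one hle huniq, fun h1 => ?_, hφ ρ⟩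
  obtain ⟨v₀, hv₀, hb⟩ := exists_eq_ite_of_sum_eq_one hle huniq (hφρ ▸ h1)
  have hρv₀ : ρ = v₀ := by
    rw [hρb, sum_congr rfl fun v hv => by rw [hb v hv, ite_smul, one_smul, zero_smul],
      sum_ite_eq' μ v₀ fun v => v, if_pos hv₀]
  exact hρv₀ ▸ hv₀
end

section
/- Suppose X satisfies: every primitive relation has the form ρ₁+⋯+ρ_k = 0 or ρ₁+⋯+ρ_k = ρ' for a ray generator ρ'. If a ray generator ρ of the fan equals a nontrivial nonnegative integer combination of ray generators other than ρ, then ρ is the right-hand side of some primitive relation (i.e., the divisor D corresponding to ρ is exceptional). -/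
/-!
Write the nonnegative combination as a multiset `M` of rays summing to `ρ`, and induct on the
size of `M`. If the support of `M` spans no cone, it contains a primitive set `P`; replacing the
elements of `P` in `M` by the right-hand side of its primitive relation (nothing, or one ray)
shrinks `M`, unless that right-hand side is `ρ` itself.

If the support does span a cone `σ`, we reach a contradiction: a ray `r ∉ σ` that is a sum of
generators of `σ` lies together with `σ` in no cone, so some primitive set `P ∋ r` lies in
`insert r σ`, and adding `P \ {r}` to the multiset gives a strictly larger multiset in `σ` whose
sum is again a ray outside `σ`. By nonsingularity a multiset in `σ` is determined by its sum,
so only finitely many such multisets exist, and one of maximal size cannot be enlarged.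
-/

theorem IsPrimitiveSet.two_le_card {n : ℕ} {F : CompleteNonsingFan n} {P : Finset (Fin n → ℤ)}
    (hP : IsPrimitiveSet F P) : 2 ≤ P.card := by
  obtain ⟨hPr, hPc, -⟩ := hP
  by_contra! h
  obtain ⟨x, hx⟩ := Finset.card_le_one_iff_subset_singleton.1 (Nat.lt_succ_iff.1 h)
  rcases Finset.subset_singleton_iff.1 hx with rfl | rfl
  · exact hPc F.empty_mem
  · exact hPc (F.singleton_mem x (hPr (Finset.mem_singleton_self x)))

namespace CompleteNonsingFan

variable {n : ℕ} (F : CompleteNonsingFan n)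

/-- Condition (ii) of Theorem 3.1. -/
def PrimitiveSumsZeroOrRay : Prop :=
  ∀ P, IsPrimitiveSet F P → (∑ v ∈ P, v = 0 ∨ ∑ v ∈ P, v ∈ F.rays)

theorem linearIndepOn_cone {σ : Finset (Fin n → ℤ)} (hσ : σ ∈ F.cones) :
    LinearIndepOn ℤ id (σ : Set (Fin n → ℤ)) := by
  obtain ⟨b, hb⟩ := F.nonsingular σ hσ
  exact b.linearIndependent.linearIndepOn_id.mono hb

theorem multiset_eq_of_sum_eq {σ : Finset (Fin n → ℤ)} (hσ : σ ∈ F.cones)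
    {M N : Multiset (Fin n → ℤ)} (hM : ∀ v ∈ M, v ∈ σ) (hN : ∀ v ∈ N, v ∈ σ)
    (h : M.sum = N.sum) : M = N := by
  have sum_eq_count_smul : ∀ L : Multiset (Fin n → ℤ), (∀ v ∈ L, v ∈ σ) →
      L.sum = ∑ v ∈ σ, (L.count v : ℤ) • v := fun L hL => by
    rw [Finset.sum_multiset_count_of_subset L σ fun v hv => hL v (Multiset.mem_toFinset.1 hv)]
    simp only [natCast_zsmul]
  have hcount := linearIndepOn_iff'.1 (F.linearIndepOn_cone hσ) σ
    (fun v => (M.count v : ℤ) - N.count v) subset_rfl (by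
      simp only [sub_smul, Finset.sum_sub_distrib, id, ← sum_eq_count_smul M hM,
        ← sum_eq_count_smul N hN, h, sub_self])
  ext v
  by_cases hv : v ∈ σ
  · exact_mod_cast sub_eq_zero.1 (hcount v hv)
  · rw [Multiset.count_eq_zero.2 fun h => hv (hM v h),
      Multiset.count_eq_zero.2 fun h => hv (hN v h)]

theorem ne_zero_of_mem_rays {ρ : Fin n → ℤ} (hρ : ρ ∈ F.rays) : ρ ≠ 0 := by
  intro h0
  have := F.multiset_eq_of_sum_eq (F.singleton_mem ρ hρ) (M := {ρ}) (N := 0) (by simp) (by simp)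
    (by simp [h0])
  exact Multiset.singleton_ne_zero ρ this

theorem exists_isPrimitiveSet_subset (T : Finset (Fin n → ℤ)) (hTr : T ⊆ F.rays)
    (hTc : T ∉ F.cones) : ∃ P ⊆ T, IsPrimitiveSet F P := by
  induction T using Finset.strongInductionOn with
  | _ T ih =>
    by_cases h : ∀ v ∈ T, T.erase v ∈ F.cones
    · exact ⟨T, subset_rfl, hTr, hTc, h⟩
    · push Not at h
      obtain ⟨v, hv, hvc⟩ := h
      obtain ⟨P, hPT, hP⟩ := ih (T.erase v) (Finset.erase_ssubset hv)
        ((Finset.erase_subset v T).trans hTr) hvc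
      exact ⟨P, hPT.trans (Finset.erase_subset v T), hP⟩

theorem exists_card_lt_of_sum_notMem_cone (hF : F.PrimitiveSumsZeroOrRay)
    {σ : Finset (Fin n → ℤ)} (hσ : σ ∈ F.cones) {M : Multiset (Fin n → ℤ)}
    (hM : ∀ v ∈ M, v ∈ σ) (hr : M.sum ∈ F.rays) (hrσ : M.sum ∉ σ) :
    ∃ M' : Multiset (Fin n → ℤ), ((∀ v ∈ M', v ∈ σ) ∧ M'.sum ∈ F.rays ∧ M'.sum ∉ σ) ∧
      Multiset.card M < Multiset.card M' := by
  set r := M.sum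
  have hins : insert r σ ∉ F.cones := fun hc => hrσ <| by
    have hMr := F.multiset_eq_of_sum_eq hc (N := {r})
      (fun v hv => Finset.mem_insert_of_mem (hM v hv)) (by simp) (by simp [r])
    exact hM r (hMr ▸ Multiset.mem_singleton_self r)
  obtain ⟨P, hPsub, hP⟩ := F.exists_isPrimitiveSet_subset _
    (Finset.insert_subset hr (F.cone_rays σ hσ)) hins
  have hrP : r ∈ P := by
    by_contra hrP
    refine hP.2.1 (F.face_mem σ hσ P fun v hv => ?_)
    exact (Finset.mem_insert.1 (hPsub hv)).resolve_left (by rintro rfl; exact hrP hv)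
  have hPσ : ∀ v ∈ P.erase r, v ∈ σ := fun v hv =>
    (Finset.mem_insert.1 (hPsub (Finset.mem_of_mem_erase hv))).resolve_left
      (Finset.ne_of_mem_erase hv)
  set M' := M + (P.erase r).val
  have hM' : ∀ v ∈ M', v ∈ σ := fun v hv => (Multiset.mem_add.1 hv).elim (hM v) (hPσ v)
  have hsum' : M'.sum = ∑ v ∈ P, v := by
    rw [Multiset.sum_add, Finset.sum_val]
    exact Finset.add_sum_erase P id hrP
  have hcard' : Multiset.card M' = Multiset.card M + (P.card - 1) := by
    rw [Multiset.card_add, Finset.card_val, Finset.card_erase_of_mem hrP]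
  have hMpos : 0 < Multiset.card M :=
    Multiset.card_pos.2 fun h0 => F.ne_zero_of_mem_rays hr (by simp [r, h0])
  have hPcard := hP.two_le_card
  rcases hF P hP with hzero | hray
  · have := F.multiset_eq_of_sum_eq hσ hM' (N := 0) (by simp) (by simp [hsum', hzero])
    rw [this, Multiset.card_zero] at hcard'
    omega
  · refine ⟨M', ⟨hM', hsum' ▸ hray, fun hmem => ?_⟩, by omega⟩
    have := F.multiset_eq_of_sum_eq hσ hM' (N := {M'.sum}) (by simpa using hmem) (by simp)
    rw [this, Multiset.card_singleton] at hcard'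
    omega

theorem multiset_sum_mem_cone (hF : F.PrimitiveSumsZeroOrRay) {σ : Finset (Fin n → ℤ)}
    (hσ : σ ∈ F.cones) {M : Multiset (Fin n → ℤ)} (hM : ∀ v ∈ M, v ∈ σ)
    (hr : M.sum ∈ F.rays) : M.sum ∈ σ := by
  by_contra hrσ
  set bad := {M : Multiset (Fin n → ℤ) | (∀ v ∈ M, v ∈ σ) ∧ M.sum ∈ F.rays ∧ M.sum ∉ σ}
  have hfin : bad.Finite := by
    refine Set.Finite.of_finite_image (f := Multiset.sum) (F.rays.finite_toSet.subset ?_)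
      fun M hM N hN h => F.multiset_eq_of_sum_eq hσ hM.1 hN.1 h
    rintro _ ⟨M, hM, rfl⟩
    exact hM.2.1
  obtain ⟨M₀, ⟨hM₀, hr₀, hr₀σ⟩, hmax⟩ :=
    Set.exists_max_image bad Multiset.card hfin ⟨M, hM, hr, hrσ⟩
  obtain ⟨M', hM', hlt⟩ := F.exists_card_lt_of_sum_notMem_cone hF hσ hM₀ hr₀ hr₀σ
  exact (hmax M' hM').not_gt hlt

theorem exists_isPrimitiveSet_sum_eq (hF : F.PrimitiveSumsZeroOrRay) {ρ : Fin n → ℤ}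
    (hρ : ρ ∈ F.rays) (M : Multiset (Fin n → ℤ)) (hM : ∀ v ∈ M, v ∈ F.rays.erase ρ)
    (hsum : M.sum = ρ) : ∃ P, IsPrimitiveSet F P ∧ ∑ v ∈ P, v = ρ := by
  have hS : M.toFinset ∉ F.cones := fun hc => by
    have hρM := F.multiset_sum_mem_cone hF hc (fun v hv => Multiset.mem_toFinset.2 hv)
      (hsum ▸ hρ)
    rw [hsum, Multiset.mem_toFinset] at hρM
    exact Finset.ne_of_mem_erase (hM ρ hρM) rfl
  obtain ⟨P, hPM, hP⟩ := F.exists_isPrimitiveSet_subset _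
    (fun v hv => Finset.mem_of_mem_erase (hM v (Multiset.mem_toFinset.1 hv))) hS
  have hle : P.val ≤ M :=
    (Multiset.le_iff_subset P.nodup).2 fun v hv => Multiset.mem_toFinset.1 (hPM hv)
  set M₀ := M - P.val with hM₀def
  have hM₀ : ∀ v ∈ M₀, v ∈ F.rays.erase ρ := fun v hv =>
    hM v (Multiset.mem_of_le tsub_le_self hv)
  have hsplit : M₀.sum + ∑ v ∈ P, v = ρ := by
    have hsum₀ := congrArg Multiset.sum (tsub_add_cancel_of_le hle)
    rw [Multiset.sum_add, Finset.sum_val] at hsum₀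
    exact hsum₀.trans hsum
  have hcard : Multiset.card M₀ + P.card = Multiset.card M := by
    rw [← Finset.card_val, ← Multiset.card_add, tsub_add_cancel_of_le hle]
  have hPcard := hP.two_le_card
  rcases hF P hP with hzero | hray
  · exact exists_isPrimitiveSet_sum_eq hF hρ M₀ hM₀ (by rwa [hzero, add_zero] at hsplit)
  · by_cases hPρ : ∑ v ∈ P, v = ρ
    · exact ⟨P, hP, hPρ⟩
    · refine exists_isPrimitiveSet_sum_eq hF hρ ((∑ v ∈ P, v) ::ₘ M₀) ?_ ?_
      · exact Multiset.forall_mem_cons.2 ⟨Finset.mem_erase.2 ⟨hPρ, hray⟩, hM₀⟩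
      · rw [Multiset.sum_cons, add_comm, hsplit]
termination_by Multiset.card M
decreasing_by all_goals (try rw [Multiset.card_cons]); rw [hM₀def] at hcard; omega

end CompleteNonsingFan

theorem stmt_8_general (n : ℕ) (F : CompleteNonsingFan n)
    (hprim : ∀ P, IsPrimitiveSet F P → (∑ v ∈ P, v = 0 ∨ ∑ v ∈ P, v ∈ F.rays))
    (ρ : Fin n → ℤ) (hρ : ρ ∈ F.rays)
    (a : (Fin n → ℤ) → ℕ)
    (hcomb : ρ = ∑ v ∈ F.rays.erase ρ, (a v : ℤ) • v) :
    ∃ P, IsPrimitiveSet F P ∧ ∑ v ∈ P, v = ρ := by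
  refine F.exists_isPrimitiveSet_sum_eq hprim hρ
    (∑ v ∈ F.rays.erase ρ, Multiset.replicate (a v) v) ?_ ?_
  · intro v hv
    obtain ⟨w, hw, hvw⟩ := Multiset.mem_sum.1 hv
    rwa [Multiset.eq_of_mem_replicate hvw]
  · simp only [Multiset.sum_sum, Multiset.sum_replicate, ← natCast_zsmul]
    exact hcomb.symm

/-- Lemma 3.3: if every primitive relation has right-hand side 0 or a
single ray generator, and a ray generator ρ equals a nontrivial nonnegative integer
combination of the other ray generators, then ρ is the right-hand side of some
primitive relation (the corresponding divisor is exceptional). -/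
theorem stmt_8 (n : ℕ) (F : CompleteNonsingFan n)
    (hprim : ∀ P, IsPrimitiveSet F P → (∑ v ∈ P, v = 0 ∨ ∑ v ∈ P, v ∈ F.rays))
    (ρ : Fin n → ℤ) (hρ : ρ ∈ F.rays)
    (a : (Fin n → ℤ) → ℕ)
    (hcomb : ρ = ∑ v ∈ F.rays.erase ρ, (a v : ℤ) • v)
    (hnontriv : ∃ v ∈ F.rays.erase ρ, 0 < a v) :
    ∃ P, IsPrimitiveSet F P ∧ ∑ v ∈ P, v = ρ :=
  stmt_8_general n F hprim ρ hρ a hcomb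
end

section
/- Let σ = ⟨ρ₁,…,ρ_k⟩ be a cone of the fan of X (satisfying the conditions of Theorem 3.8: every primitive relation has right-hand side 0 or a ray generator, each ray generator appearing on the right of at most one primitive relation). Let {β₁',…,β_s'} be special exceptional classes for σ, and let {β₁,…,β_t} be exceptional classes whose exceptional sets S_i each satisfy |S_i ∩ {D₁,…,D_k}| = |S_i| − 1, with ∫_{β₁} D₁ = −1. If β₁+⋯+β_t = β₁'+⋯+β_s', then ∫_{β_i'} D₁ ≠ 0 for some i. -/
/-- An exceptional set: divisors whose ray generators are linearly independent and
sum to another ray generator ρ̃ (the exceptional divisor). -/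
def IsExceptionalSet {n : ℕ} (F : CompleteNonsingFan n)
    (E : Finset (Fin n → ℤ)) (ρt : Fin n → ℤ) : Prop :=
  E ⊆ F.rays ∧ ρt ∈ F.rays ∧ ρt ∉ E ∧
    LinearIndependent ℤ (fun v : E => (v : Fin n → ℤ)) ∧ ∑ v ∈ E, v = ρt

/-- The exceptional class of an exceptional relation Σ_{ρ∈E} ρ = ρ̃, as the function
ρ ↦ ∫_β D_ρ: value 1 on E, −1 at ρ̃, 0 elsewhere. -/
def excClass {n : ℕ} (E : Finset (Fin n → ℤ)) (ρt : Fin n → ℤ) : (Fin n → ℤ) → ℤ :=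
  fun ρ => (if ρ ∈ E then 1 else 0) - (if ρ = ρt then 1 else 0)

/-- Special for a cone σ: some k−1 of the generators of E, and ρ̃, lie in σ. -/
def IsSpecialFor {n : ℕ} (σ E : Finset (Fin n → ℤ)) (ρt : Fin n → ℤ) : Prop :=
  ρt ∈ σ ∧ ∃ ρ₀ ∈ E, E.erase ρ₀ ⊆ σ

/-!
Suppose every `β'ⱼ` pairs to `0` with `D₁`. Starting from `β₀`, whose exceptional divisor is `ρ₁`,
chain exceptional classes `βᵢ` so that each new exceptional divisor is the unique divisor outside
`σ` of the previous exceptional set. The sum of a chain is nonnegative on `σ` away from `ρ₁`,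
and outside `σ` it is a single divisor `x`. This `x` lies in no special set `E'ⱼ`: the coordinate
of `ρ̃'ⱼ` in a basis through `σ` would make the linear relation of the chain positive. Hence
`β'₁ + ⋯ + β'ₛ` vanishes at `x`, some unused `βᵢ` has exceptional divisor `x`, and every chain
extends, which is absurd since there are finitely many `βᵢ`.
-/

theorem Module.Basis.exists_linearMap_eq_ite {ι R V : Type*} [CommSemiring R] [Nontrivial R]
    [AddCommMonoid V] [Module R V] [DecidableEq V] (b : Module.Basis ι R V) {s : Set V}
    (hs : s ⊆ Set.range b) {τ : V} (hτ : τ ∈ s) :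
    ∃ ℓ : V →ₗ[R] R, ∀ v ∈ s, ℓ v = if v = τ then 1 else 0 := by
  obtain ⟨k, rfl⟩ := hs hτ
  refine ⟨b.coord k, fun v hv => ?_⟩
  obtain ⟨k', rfl⟩ := hs hv
  classical
  simp only [Module.Basis.coord_apply, b.repr_self, Finsupp.single_apply, b.injective.eq_iff,
    eq_comm]

namespace Finset

variable {V : Type*} [DecidableEq V] {s t : Finset V}

theorem exists_sdiff_eq_singleton (hs : s.Nonempty) (h : (s ∩ t).card = s.card - 1) :
    ∃ o, s \ t = {o} := by
  apply card_eq_one.mp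
  have := card_sdiff_add_card_inter s t
  have := hs.card_pos
  omega

theorem mem_iff_eq_of_sdiff_eq_singleton {o x : V} (h : s \ t = {o}) (hx : x ∉ t) :
    x ∈ s ↔ x = o := by
  rw [← mem_singleton, ← h, mem_sdiff]
  tauto

end Finset

section ExceptionalClass

variable {n : ℕ} {E : Finset (Fin n → ℤ)} {ρt ρ : Fin n → ℤ}

theorem excClass_of_ne (h : ρ ≠ ρt) : excClass E ρt ρ = if ρ ∈ E then 1 else 0 := by
  simp [excClass, h]

theorem excClass_self (h : ρt ∉ E) : excClass E ρt ρt = -1 := by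
  simp [excClass, h]

theorem eq_of_excClass_neg (h : excClass E ρt ρ < 0) : ρ = ρt := by
  by_contra hne
  rw [excClass_of_ne hne] at h
  split_ifs at h <;> omega

theorem sum_excClass_smul_eq_zero {S : Finset (Fin n → ℤ)} (hE : E ⊆ S) (hρt : ρt ∈ S)
    (hsum : ∑ v ∈ E, v = ρt) : ∑ ρ ∈ S, excClass E ρt ρ • ρ = 0 := by
  simp [excClass, sub_smul, Finset.sum_sub_distrib, ite_smul, Finset.inter_eq_right.mpr hE, hρt,
    hsum]

theorem IsExceptionalSet.nonempty {F : CompleteNonsingFan n} (h : IsExceptionalSet F E ρt) :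
    E.Nonempty := by
  rw [Finset.nonempty_iff_ne_empty]
  rintro rfl
  exact F.ne_zero_of_mem_rays h.2.1 (by simpa using h.2.2.2.2.symm)

end ExceptionalClass

/-- The shape of `β_{i₀} + ⋯ + β_{iᵣ}` for a chain of exceptional classes with `ρ̃_{i₀} = ρ₁` in
which each `ρ̃_{i_{l+1}}` is the divisor outside `σ` of the previous exceptional set: outside `σ`
only the last such divisor `x` survives. -/
def IsChainClass {V : Type*} [DecidableEq V] (σ : Finset V) (ρ1 x : V) (B : V → ℤ) : Prop :=
  x ∉ σ ∧ (∀ ρ ∉ σ, B ρ = if ρ = x then 1 else 0) ∧ ∀ ρ ∈ σ, ρ ≠ ρ1 → 0 ≤ B ρ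

section ChainClass

variable {n : ℕ} {σ E : Finset (Fin n → ℤ)} {ρ1 x o : Fin n → ℤ}

theorem isChainClass_excClass (hρ1 : ρ1 ∈ σ) (ho : E \ σ = {o}) :
    IsChainClass σ ρ1 o (excClass E ρ1) := by
  refine ⟨(Finset.mem_sdiff.mp (ho ▸ Finset.mem_singleton_self o)).2, fun ρ hρ => ?_,
    fun ρ _ hne => ?_⟩
  · simp only [excClass_of_ne (ne_of_mem_of_not_mem hρ1 hρ).symm,
      Finset.mem_iff_eq_of_sdiff_eq_singleton ho hρ]
  · rw [excClass_of_ne hne]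
    split_ifs <;> omega

theorem IsChainClass.add_excClass {B : (Fin n → ℤ) → ℤ} (hB : IsChainClass σ ρ1 x B)
    (ho : E \ σ = {o}) : IsChainClass σ ρ1 o (fun ρ => excClass E x ρ + B ρ) := by
  obtain ⟨hx, hout, hin⟩ := hB
  refine ⟨(Finset.mem_sdiff.mp (ho ▸ Finset.mem_singleton_self o)).2, fun ρ hρ => ?_,
    fun ρ hρ hne => ?_⟩
  · simp only [excClass, hout ρ hρ, Finset.mem_iff_eq_of_sdiff_eq_singleton ho hρ]
    split_ifs <;> omega
  · dsimp only
    rw [excClass_of_ne (ne_of_mem_of_not_mem hρ hx)]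
    have := hin ρ hρ hne
    split_ifs <;> omega

theorem IsChainClass.not_mem_of_isSpecialFor {F : CompleteNonsingFan n}
    {B : (Fin n → ℤ) → ℤ} (hB : IsChainClass σ ρ1 x B) (hrel : ∑ ρ ∈ F.rays, B ρ • ρ = 0)
    (hσ : σ ∈ F.cones) {E' : Finset (Fin n → ℤ)} {ρt' : Fin n → ℤ}
    (hexc : IsExceptionalSet F E' ρt') (hspec : IsSpecialFor σ E' ρt') (hne : ρt' ≠ ρ1) :
    x ∉ E' := by
  intro hxE
  obtain ⟨hx, hout, hin⟩ := hB
  obtain ⟨hE'rays, -, hρt'E', -, hsum⟩ := hexc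
  obtain ⟨hρt'σ, ρ₀, -, herase⟩ := hspec
  obtain rfl : x = ρ₀ := by
    by_contra h
    exact hx (herase (Finset.mem_erase.mpr ⟨h, hxE⟩))
  obtain ⟨b, hb⟩ := F.nonsingular σ hσ
  obtain ⟨ℓ, hℓ⟩ := b.exists_linearMap_eq_ite hb hρt'σ
  have hℓx : ℓ x = 1 := by
    have hrest : ∑ v ∈ E'.erase x, ℓ v = 0 := Finset.sum_eq_zero fun v hv => by
      rw [hℓ v (herase hv), if_neg (ne_of_mem_of_not_mem (Finset.mem_of_mem_erase hv) hρt'E')]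
    have := congrArg ℓ hsum
    rwa [← Finset.add_sum_erase _ _ hxE, map_add, map_sum, hrest, add_zero, hℓ ρt' hρt'σ,
      if_pos rfl] at this
  have hterm : ∀ ρ ∈ F.rays, 0 ≤ B ρ * ℓ ρ := fun ρ _ => by
    by_cases hρ : ρ ∈ σ
    · rw [hℓ ρ hρ]
      split_ifs with h
      · simpa [h] using hin ρt' hρt'σ hne
      · simp
    · rw [hout ρ hρ]
      split_ifs with h
      · simp [h, hℓx]
      · simp
  have hzero : ∑ ρ ∈ F.rays, B ρ * ℓ ρ = 0 := by
    simpa only [map_sum, map_zsmul, smul_eq_mul, map_zero] using congrArg ℓ hrel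
  have := Finset.single_le_sum hterm (hE'rays hxE)
  rw [hzero, hout x hx, if_pos rfl, hℓx] at this
  omega

end ChainClass

theorem exists_excClass_ne_zero_of_sum_eq {n : ℕ} {ι κ : Type*} [Fintype ι] [Fintype κ]
    {F : CompleteNonsingFan n} {σ : Finset (Fin n → ℤ)} (hσ : σ ∈ F.cones)
    {ρ1 : Fin n → ℤ} (hρ1 : ρ1 ∈ σ) {E' : κ → Finset (Fin n → ℤ)} {ρt' : κ → Fin n → ℤ}
    (hexc' : ∀ j, IsExceptionalSet F (E' j) (ρt' j)) (hspec' : ∀ j, IsSpecialFor σ (E' j) (ρt' j))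
    {E : ι → Finset (Fin n → ℤ)} {ρt : ι → Fin n → ℤ}
    (hexc : ∀ i, IsExceptionalSet F (E i) (ρt i)) (hout : ∀ i, ∃ o, E i \ σ = {o})
    {i₀ : ι} (hi₀ : ρt i₀ = ρ1)
    (hsum : ∀ ρ, ∑ i, excClass (E i) (ρt i) ρ = ∑ j, excClass (E' j) (ρt' j) ρ) :
    ∃ j, excClass (E' j) (ρt' j) ρ1 ≠ 0 := by
  classical
  by_contra! hzero
  have hne : ∀ j, ρt' j ≠ ρ1 := fun j h => by
    have := hzero j
    rw [← h, excClass_self (hexc' j).2.2.1] at this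
    omega
  set B : Finset ι → (Fin n → ℤ) → ℤ := fun J ρ => ∑ i ∈ J, excClass (E i) (ρt i) ρ
  have hrel : ∀ J, ∑ ρ ∈ F.rays, B J ρ • ρ = 0 := fun J => by
    simp only [B, Finset.sum_smul]
    rw [Finset.sum_comm]
    exact Finset.sum_eq_zero fun i _ =>
      sum_excClass_smul_eq_zero (hexc i).1 (hexc i).2.1 (hexc i).2.2.2.2
  obtain ⟨o₀, ho₀⟩ := hout i₀
  obtain ⟨J, hJ, hJmax⟩ := (Finset.univ.filter fun J => ∃ x, IsChainClass σ ρ1 x (B J))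
    |>.exists_max_image Finset.card
      ⟨{i₀}, by simpa [B, hi₀] using ⟨o₀, isChainClass_excClass hρ1 ho₀⟩⟩
  obtain ⟨x, hx⟩ := (Finset.mem_filter.mp hJ).2
  have hx' : ∀ j, excClass (E' j) (ρt' j) x = 0 := fun j => by
    rw [excClass_of_ne (ne_of_mem_of_not_mem (hspec' j).1 hx.1).symm,
      if_neg (hx.not_mem_of_isSpecialFor (hrel J) hσ (hexc' j) (hspec' j) (hne j))]
  have hrest : ∑ i ∈ Jᶜ, excClass (E i) (ρt i) x = -1 := by
    have := Finset.sum_compl_add_sum J (fun i => excClass (E i) (ρt i) x)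
    have hJx : B J x = 1 := by rw [hx.2.1 x hx.1, if_pos rfl]
    rw [hsum, Finset.sum_eq_zero fun j _ => hx' j] at this
    simp only [B] at hJx
    omega
  obtain ⟨i, hi, hneg⟩ : ∃ i ∈ Jᶜ, excClass (E i) (ρt i) x < 0 :=
    Finset.exists_lt_of_sum_lt (by simp [hrest])
  obtain rfl := eq_of_excClass_neg hneg
  obtain ⟨o, ho⟩ := hout i
  have hiJ : i ∉ J := Finset.mem_compl.mp hi
  have := hJmax (insert i J) (Finset.mem_filter.mpr ⟨Finset.mem_univ _, o,
    by simpa [B, Finset.sum_insert hiJ] using hx.add_excClass ho⟩)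
  rw [Finset.card_insert_of_notMem hiJ] at this
  omega

theorem stmt_11_general (n : ℕ) (F : CompleteNonsingFan n)
    (σ : Finset (Fin n → ℤ)) (hσ : σ ∈ F.cones)
    (ρ1 : Fin n → ℤ) (hρ1 : ρ1 ∈ σ)
    (s : ℕ) (E' : Fin s → Finset (Fin n → ℤ)) (ρt' : Fin s → (Fin n → ℤ))
    (hexc' : ∀ i, IsExceptionalSet F (E' i) (ρt' i))
    (hspec' : ∀ i, IsSpecialFor σ (E' i) (ρt' i))
    (t : ℕ) (E : Fin (t + 1) → Finset (Fin n → ℤ)) (ρt : Fin (t + 1) → (Fin n → ℤ))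
    (hexc : ∀ i, IsExceptionalSet F (E i) (ρt i))
    (hcap : ∀ i, ((E i) ∩ σ).card = (E i).card - 1)
    (h1 : excClass (E 0) (ρt 0) ρ1 = -1)
    (hsum : ∀ ρ, ∑ i, excClass (E i) (ρt i) ρ = ∑ i, excClass (E' i) (ρt' i) ρ) :
    ∃ i, excClass (E' i) (ρt' i) ρ1 ≠ 0 :=
  exists_excClass_ne_zero_of_sum_eq hσ hρ1 hexc' hspec' hexc
    (fun i => Finset.exists_sdiff_eq_singleton (hexc i).nonempty (hcap i))
    (eq_of_excClass_neg (h1 ▸ neg_one_lt_zero)).symm hsum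

/-- Lemma 4.10: let σ = ⟨ρ₁,…,ρ_k⟩ be a cone of a fan in which every
primitive relation has right-hand side 0 or a ray generator, each ray generator
appearing on the right of at most one primitive relation. Let β'₁,…,β'_s be special
exceptional classes for σ, and β₀,…,β_t exceptional classes whose exceptional sets
Sᵢ satisfy |Sᵢ ∩ σ| = |Sᵢ| − 1, with ∫_{β₀} D₁ = −1 for a given ray ρ₁ ∈ σ.
If β₀+⋯+β_t = β'₁+⋯+β'_s then ∫_{β'ᵢ} D₁ ≠ 0 for some i. -/
theorem stmt_11 (n : ℕ) (F : CompleteNonsingFan n)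
    (hprim : ∀ P, IsPrimitiveSet F P → (∑ v ∈ P, v = 0 ∨ ∑ v ∈ P, v ∈ F.rays))
    (huniq : ∀ P Q, IsPrimitiveSet F P → IsPrimitiveSet F Q →
        ∑ v ∈ P, v ∈ F.rays → ∑ v ∈ P, v = ∑ v ∈ Q, v → P = Q)
    (σ : Finset (Fin n → ℤ)) (hσ : σ ∈ F.cones)
    (ρ1 : Fin n → ℤ) (hρ1 : ρ1 ∈ σ)
    (s : ℕ) (E' : Fin s → Finset (Fin n → ℤ)) (ρt' : Fin s → (Fin n → ℤ))
    (hexc' : ∀ i, IsExceptionalSet F (E' i) (ρt' i))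
    (hspec' : ∀ i, IsSpecialFor σ (E' i) (ρt' i))
    (t : ℕ) (E : Fin (t + 1) → Finset (Fin n → ℤ)) (ρt : Fin (t + 1) → (Fin n → ℤ))
    (hexc : ∀ i, IsExceptionalSet F (E i) (ρt i))
    (hcap : ∀ i, ((E i) ∩ σ).card = (E i).card - 1)
    (h1 : excClass (E 0) (ρt 0) ρ1 = -1)
    (hsum : ∀ ρ, ∑ i, excClass (E i) (ρt i) ρ = ∑ i, excClass (E' i) (ρt' i) ρ) :
    ∃ i, excClass (E' i) (ρt' i) ρ1 ≠ 0 :=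
  stmt_11_general n F σ hσ ρ1 hρ1 s E' ρt' hexc' hspec' t E ρt hexc hcap h1 hsum
end

section
/- Let X be a nonsingular projective toric variety whose quantum cohomology satisfies the relation D₁^{a₁}⋯D_m^{a_m} = q^β for every very effective class β (where a_i = ∫_β D_i ≥ 0). Then for every primitive set {D₁,…,D_k} with primitive relation ρ₁+⋯+ρ_k = a₁ρ₁'+⋯+a_rρ_r' and primitive class β, the relation D₁⋯D_k = q^β (D₁')^{a₁}⋯(D_r')^{a_r} holds in QH*(X). (Formally: in the ℚ[C]-algebra QH*(X), writing a primitive class β = β₂ − β₁ with β₁, β₂ very effective, the stated monomial identity follows by multiplying both sides by the non-zero-divisor q^{β₁} and using the very-effective relations.) -/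
/-- Proposition 2.8, first part: in a (quantum cohomology) ring in
which the relation D₁^{a₁}⋯D_m^{a_m} = q^β holds for every very effective class β
(aᵢ = ∫_β Dᵢ ≥ 0), every primitive relation gives the deformed monomial relation
∏_{i∈K} Dᵢ = q^β ∏_{j∈R} Dⱼ^{−∫_β Dⱼ}, where K is the primitive set and R the rays
of the cone on the right-hand side; β is written β₂ − β₁ with β₁, β₂ very effective,
and q^{β₁} is a non-zero-divisor. -/
theorem stmt_13 (A : Type*) [CommRing A] (m : ℕ) (D : Fin m → A)
    (H : Type*) [AddCommGroup H]
    (pair : H →+ (Fin m → ℤ))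
    (Eff : AddSubmonoid H)
    (q : H → A)
    (hqadd : ∀ β γ : H, β ∈ Eff → γ ∈ Eff → q (β + γ) = q β * q γ)
    (hrel : ∀ β : H, β ∈ Eff → β ≠ 0 → (∀ i, 0 ≤ pair β i) →
        ∏ i, D i ^ (pair β i).toNat = q β)
    (hreg : ∀ β : H, β ∈ Eff → β ≠ 0 → (∀ i, 0 ≤ pair β i) →
        ∀ x y : A, q β * x = q β * y → x = y)
    (β : H) (hβEff : β ∈ Eff)
    (K R : Finset (Fin m)) (hdisj : Disjoint K R)
    (hK : ∀ i ∈ K, pair β i = 1) (hR : ∀ i ∈ R, pair β i < 0)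
    (h0 : ∀ i, i ∉ K → i ∉ R → pair β i = 0)
    (β₁ β₂ : H) (hβdiff : β = β₂ - β₁)
    (h1 : β₁ ∈ Eff ∧ β₁ ≠ 0 ∧ ∀ i, 0 ≤ pair β₁ i)
    (h2 : β₂ ∈ Eff ∧ β₂ ≠ 0 ∧ ∀ i, 0 ≤ pair β₂ i) :
    ∏ i ∈ K, D i = q β * ∏ i ∈ R, D i ^ (-(pair β i)).toNat := by
  obtain ⟨hE1, hn1, hp1⟩ := h1
  obtain ⟨hE2, hn2, hp2⟩ := h2
  have hβ₂ : β₂ = β₁ + β := by rw [hβdiff]; abel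
  apply hreg β₁ hE1 hn1 hp1
  have hq2 : q β₁ * q β = q β₂ := by rw [hβ₂, hqadd _ _ hE1 hβEff]
  rw [← mul_assoc, hq2, ← hrel β₁ hE1 hn1 hp1, ← hrel β₂ hE2 hn2 hp2]
  have hgen : ∀ (s : Finset (Fin m)) (g : Fin m → ℕ),
      ∏ i ∈ s, D i ^ g i = ∏ i, D i ^ (if i ∈ s then g i else 0) := by
    intro s g
    simp only [pow_ite, pow_zero]
    rw [Finset.prod_ite_mem, Finset.univ_inter]
  have hK' : ∏ i ∈ K, D i = ∏ i, D i ^ (if i ∈ K then 1 else 0) := by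
    simp [hgen K (fun _ => 1)]
  rw [hK', hgen R (fun i => (-(pair β i)).toNat), ← Finset.prod_mul_distrib,
    ← Finset.prod_mul_distrib]
  apply Finset.prod_congr rfl
  intro i _
  rw [← pow_add, ← pow_add]
  congr 1
  have hpair : pair β₂ i = pair β₁ i + pair β i := by
    rw [hβ₂, map_add]; simp
  have h1i : 0 ≤ pair β₁ i := hp1 i
  have h2i : 0 ≤ pair β₂ i := hp2 i
  by_cases hiK : i ∈ K
  · have hiR : i ∉ R := Finset.disjoint_left.mp hdisj hiK
    have := hK i hiK
    rw [if_pos hiK, if_neg hiR]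
    omega
  · by_cases hiR : i ∈ R
    · have := hR i hiR
      rw [if_neg hiK, if_pos hiR]
      omega
    · have := h0 i hiK hiR
      rw [if_neg hiK, if_neg hiR]
      omega
end

section
/- Let Δ be a complete nonsingular fan in ℤⁿ satisfying: every primitive relation has right-hand side 0 or a ray generator, and every ray generator appears on the right-hand side of at most one primitive relation. Let X → X' be the blow-down corresponding to the primitive relation ρ₁+⋯+ρ_k = ρ̂ (so the fan Δ' of X' has the same rays except ρ̂, and contains the cone ⟨ρ₁,…,ρ_k⟩). Then the primitive sets of Δ' are precisely: (a) the primitive sets of Δ not containing the divisor D̂ of ρ̂, other than {D₁,…,D_k}; and (b) sets of the form (S∖{D̂}) ∪ {D₁,…,D_k} (a disjoint union) for certain primitive sets S of Δ containing D̂; and for sets of type (b), the primitive relation of S' in Δ' has the same right-hand side as the primitive relation of S in Δ. Consequently Δ' also satisfies both hypotheses. -/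
/-!
A primitive set `Q` of `F'` either does not contain `P₀`, and is then primitive in `F`, or
contains it, and then `(Q ∖ P₀) ∪ {ρh}` is primitive in `F` with the same sum, since
`∑ P₀ = ρh`. As `Q` is recovered from that primitive set of `F`, both hypotheses pass from `F`
to `F'`: the only ray sum that is lost is `ρh`, and by uniqueness it is the sum of `P₀` alone.
-/

open Finset

theorem Module.Basis.sum_ne_zero_of_subset_range {ι R M : Type*} [Semiring R] [Nontrivial R]
    [AddCommMonoid M] [Module R M] (b : Module.Basis ι R M) {s : Finset M}
    (hs : (s : Set M) ⊆ Set.range b) (hne : s.Nonempty) : ∑ v ∈ s, v ≠ 0 := by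
  classical
  obtain ⟨w, hw⟩ := hne
  obtain ⟨i, rfl⟩ := hs hw
  have hcoord : b.repr (∑ v ∈ s, v) i = 1 := by
    rw [map_sum, Finsupp.finsetSum_apply, sum_eq_single_of_mem (b i) hw]
    · simp
    · intro v hv hvi
      obtain ⟨j, rfl⟩ := hs hv
      rw [b.repr_self, Finsupp.single_apply, if_neg (ne_of_apply_ne b hvi)]
  intro hsum
  simp [hsum] at hcoord

namespace CompleteNonsingFan

variable {n : ℕ} {F : CompleteNonsingFan n}

theorem sum_ne_zero_of_mem_cones {σ : Finset (Fin n → ℤ)} (hσ : σ ∈ F.cones)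
    (hne : σ.Nonempty) : ∑ v ∈ σ, v ≠ 0 := by
  obtain ⟨b, hb⟩ := F.nonsingular σ hσ
  exact b.sum_ne_zero_of_subset_range hb hne

end CompleteNonsingFan

namespace IsPrimitiveSet

variable {n : ℕ} {F : CompleteNonsingFan n} {P : Finset (Fin n → ℤ)}

theorem nonempty (hP : IsPrimitiveSet F P) : P.Nonempty :=
  nonempty_iff_ne_empty.2 fun h => hP.2.1 (h ▸ F.empty_mem)

theorem mem_cones_of_ssubset (hP : IsPrimitiveSet F P) {τ : Finset (Fin n → ℤ)}
    (hτ : τ ⊂ P) : τ ∈ F.cones := by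
  obtain ⟨x, hxP, hxτ⟩ := exists_of_ssubset hτ
  exact F.face_mem _ (hP.2.2 x hxP) τ (subset_erase.2 ⟨hτ.subset, hxτ⟩)

theorem sum_notMem (hP : IsPrimitiveSet F P) {ρ : Fin n → ℤ} (hsum : ∑ v ∈ P, v = ρ) :
    ρ ∉ P := by
  intro hρ
  have hrest : ∑ v ∈ P.erase ρ, v = 0 :=
    add_eq_right.1 ((sum_erase_add P id hρ).trans hsum)
  rcases (P.erase ρ).eq_empty_or_nonempty with hempty | hne
  · rcases (erase_eq_empty_iff P ρ).1 hempty with rfl | rfl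
    · exact notMem_empty ρ hρ
    · exact hP.2.1 (F.singleton_mem ρ (hP.1 hρ))
  · exact CompleteNonsingFan.sum_ne_zero_of_mem_cones (hP.2.2 ρ hρ) hne hrest

end IsPrimitiveSet

/-- `F` is the blow-up of `F'` along the cone spanned by `P₀`, with exceptional ray `ρh`. -/
structure IsBlowDown {n : ℕ} (F F' : CompleteNonsingFan n) (P₀ : Finset (Fin n → ℤ))
    (ρh : Fin n → ℤ) : Prop where
  rays_eq : F'.rays = F.rays.erase ρh
  mem_cones_iff : ∀ σ : Finset (Fin n → ℤ), σ ∈ F'.cones ↔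
    ((σ ∈ F.cones ∧ ρh ∉ σ) ∨ ∃ τ ∈ F.cones, ρh ∈ τ ∧ σ = (τ.erase ρh) ∪ P₀)

namespace IsBlowDown

variable {n : ℕ} {F F' : CompleteNonsingFan n} {P₀ Q σ : Finset (Fin n → ℤ)} {ρh : Fin n → ℤ}

theorem subset_rays_iff (h : IsBlowDown F F' P₀ ρh) :
    Q ⊆ F'.rays ↔ Q ⊆ F.rays ∧ ρh ∉ Q := by
  rw [h.rays_eq, subset_erase]

theorem mem_cones_of_mem_cones (h : IsBlowDown F F' P₀ ρh) (hσ : σ ∈ F.cones)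
    (hρh : ρh ∉ σ) : σ ∈ F'.cones :=
  (h.mem_cones_iff σ).2 (Or.inl ⟨hσ, hρh⟩)

theorem erase_union_mem_cones (h : IsBlowDown F F' P₀ ρh) {τ : Finset (Fin n → ℤ)}
    (hτ : τ ∈ F.cones) (hρh : ρh ∈ τ) : τ.erase ρh ∪ P₀ ∈ F'.cones :=
  (h.mem_cones_iff _).2 (Or.inr ⟨τ, hτ, hρh, rfl⟩)

theorem mem_cones_of_not_subset (h : IsBlowDown F F' P₀ ρh) (hσ : σ ∈ F'.cones)
    (hP₀σ : ¬P₀ ⊆ σ) : σ ∈ F.cones := by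
  rcases (h.mem_cones_iff σ).1 hσ with ⟨hσF, -⟩ | ⟨τ, -, -, rfl⟩
  · exact hσF
  · exact absurd subset_union_right hP₀σ

theorem exists_eq_erase_union (h : IsBlowDown F F' P₀ ρh) (hP₀ : P₀ ∉ F.cones)
    (hσ : σ ∈ F'.cones) (hP₀σ : P₀ ⊆ σ) :
    ∃ τ ∈ F.cones, ρh ∈ τ ∧ σ = τ.erase ρh ∪ P₀ := by
  rcases (h.mem_cones_iff σ).1 hσ with ⟨hσF, -⟩ | hτ
  · exact absurd (F.face_mem σ hσF P₀ hP₀σ) hP₀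
  · exact hτ

theorem isPrimitiveSet_of_isPrimitiveSet (h : IsBlowDown F F' P₀ ρh) (hP₀ : P₀ ∉ F.cones)
    (hQ : IsPrimitiveSet F Q) (hρh : ρh ∉ Q) (hQP₀ : Q ≠ P₀) : IsPrimitiveSet F' Q := by
  refine ⟨h.subset_rays_iff.2 ⟨hQ.1, hρh⟩, fun hQ' => ?_, fun ρ hρ =>
    h.mem_cones_of_mem_cones (hQ.2.2 ρ hρ) fun hρh' => hρh (mem_of_mem_erase hρh')⟩
  by_cases hP₀Q : P₀ ⊆ Q
  · exact hP₀ (hQ.mem_cones_of_ssubset (ssubset_of_subset_of_ne hP₀Q hQP₀.symm))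
  · exact hQ.2.1 (h.mem_cones_of_not_subset hQ' hP₀Q)

theorem isPrimitiveSet_of_not_subset (h : IsBlowDown F F' P₀ ρh) (hQ : IsPrimitiveSet F' Q)
    (hP₀Q : ¬P₀ ⊆ Q) : IsPrimitiveSet F Q := by
  obtain ⟨hQrays, hρh⟩ := h.subset_rays_iff.1 hQ.1
  exact ⟨hQrays, fun hQF => hQ.2.1 (h.mem_cones_of_mem_cones hQF hρh), fun ρ hρ =>
    h.mem_cones_of_not_subset (hQ.2.2 ρ hρ) fun hP₀ => hP₀Q (hP₀.trans (erase_subset ρ Q))⟩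

theorem sdiff_mem_cones (h : IsBlowDown F F' P₀ ρh) (hP₀ : IsPrimitiveSet F P₀)
    (hQ : IsPrimitiveSet F' Q) (hP₀Q : P₀ ⊆ Q) : Q \ P₀ ∈ F.cones := by
  obtain ⟨x, hx⟩ := hP₀.nonempty
  exact h.mem_cones_of_not_subset (hQ.mem_cones_of_ssubset (sdiff_ssubset hP₀Q ⟨x, hx⟩))
    fun hsub => (mem_sdiff.1 (hsub hx)).2 hx

theorem insert_sdiff_erase_mem_cones (h : IsBlowDown F F' P₀ ρh) (hP₀ : P₀ ∉ F.cones)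
    (hQ : IsPrimitiveSet F' Q) (hP₀Q : P₀ ⊆ Q) {ρ : Fin n → ℤ} (hρ : ρ ∈ Q \ P₀) :
    (insert ρh (Q \ P₀)).erase ρ ∈ F.cones := by
  obtain ⟨τ, hτ, hρhτ, hτQ⟩ := h.exists_eq_erase_union hP₀ (hQ.2.2 ρ (mem_sdiff.1 hρ).1)
    fun x hx => mem_erase.2 ⟨fun hxρ => (mem_sdiff.1 hρ).2 (hxρ ▸ hx), hP₀Q hx⟩
  refine F.face_mem τ hτ _ fun x hx => ?_
  obtain ⟨hxρ, hx⟩ := mem_erase.1 hx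
  rcases mem_insert.1 hx with rfl | hx
  · exact hρhτ
  · obtain ⟨hxQ, hxP₀⟩ := mem_sdiff.1 hx
    have hx' : x ∈ τ.erase ρh ∪ P₀ := hτQ ▸ mem_erase.2 ⟨hxρ, hxQ⟩
    exact mem_of_mem_erase ((mem_union.1 hx').resolve_right hxP₀)

theorem isPrimitiveSet_insert_sdiff (h : IsBlowDown F F' P₀ ρh) (hP₀ : IsPrimitiveSet F P₀)
    (hρh : ρh ∈ F.rays) (hQ : IsPrimitiveSet F' Q) (hP₀Q : P₀ ⊆ Q) :
    IsPrimitiveSet F (insert ρh (Q \ P₀)) := by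
  obtain ⟨hQrays, hρhQ⟩ := h.subset_rays_iff.1 hQ.1
  have hρh' : ρh ∉ Q \ P₀ := fun hρh' => hρhQ (mem_sdiff.1 hρh').1
  refine ⟨insert_subset hρh (sdiff_subset.trans hQrays), fun hcone => hQ.2.1 ?_, fun ρ hρ => ?_⟩
  · simpa [erase_insert hρh', sdiff_union_of_subset hP₀Q] using
      h.erase_union_mem_cones hcone (mem_insert_self ρh _)
  · rcases mem_insert.1 hρ with rfl | hρ
    · rw [erase_insert hρh']
      exact h.sdiff_mem_cones hP₀ hQ hP₀Q
    · exact h.insert_sdiff_erase_mem_cones hP₀.2.1 hQ hP₀Q hρ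

theorem isPrimitiveSet_cases (h : IsBlowDown F F' P₀ ρh) (hP₀ : IsPrimitiveSet F P₀)
    (hρh : ρh ∈ F.rays) (hsum : ∑ v ∈ P₀, v = ρh) (hQ : IsPrimitiveSet F' Q) :
    (IsPrimitiveSet F Q ∧ ρh ∉ Q ∧ Q ≠ P₀) ∨
      ∃ S, IsPrimitiveSet F S ∧ ρh ∈ S ∧ Disjoint (S.erase ρh) P₀ ∧
        Q = S.erase ρh ∪ P₀ ∧ ∑ v ∈ Q, v = ∑ v ∈ S, v := by
  have hρhQ : ρh ∉ Q := (h.subset_rays_iff.1 hQ.1).2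
  by_cases hP₀Q : P₀ ⊆ Q
  · have hρh' : ρh ∉ Q \ P₀ := fun hρh' => hρhQ (mem_sdiff.1 hρh').1
    refine Or.inr ⟨_, h.isPrimitiveSet_insert_sdiff hP₀ hρh hQ hP₀Q, mem_insert_self ρh _, ?_⟩
    rw [erase_insert hρh', sdiff_union_of_subset hP₀Q, sum_insert hρh', ← hsum,
      add_comm, sum_sdiff hP₀Q]
    exact ⟨sdiff_disjoint, rfl, rfl⟩
  · exact Or.inl ⟨h.isPrimitiveSet_of_not_subset hQ hP₀Q, hρhQ, fun hQP₀ => hP₀Q hQP₀.ge⟩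

theorem exists_isPrimitiveSet_sum_eq (h : IsBlowDown F F' P₀ ρh) (hP₀ : IsPrimitiveSet F P₀)
    (hρh : ρh ∈ F.rays) (hsum : ∑ v ∈ P₀, v = ρh) (hQ : IsPrimitiveSet F' Q) :
    ∃ S, IsPrimitiveSet F S ∧ S ≠ P₀ ∧ (Q = if ρh ∈ S then S.erase ρh ∪ P₀ else S) ∧
      ∑ v ∈ Q, v = ∑ v ∈ S, v := by
  rcases h.isPrimitiveSet_cases hP₀ hρh hsum hQ with
    ⟨hQF, hρhQ, hQP₀⟩ | ⟨S, hS, hρhS, -, hQS, hsumS⟩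
  · exact ⟨Q, hQF, hQP₀, (if_neg hρhQ).symm, rfl⟩
  · exact ⟨S, hS, fun hSP₀ => hP₀.sum_notMem hsum (hSP₀ ▸ hρhS), (if_pos hρhS).symm ▸ hQS, hsumS⟩

theorem sum_eq_zero_or_mem_rays (h : IsBlowDown F F' P₀ ρh) (hP₀ : IsPrimitiveSet F P₀)
    (hρh : ρh ∈ F.rays) (hsum : ∑ v ∈ P₀, v = ρh)
    (hprim : ∀ P, IsPrimitiveSet F P → (∑ v ∈ P, v = 0 ∨ ∑ v ∈ P, v ∈ F.rays))
    (huniq : ∀ P Q, IsPrimitiveSet F P → IsPrimitiveSet F Q →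
      ∑ v ∈ P, v ∈ F.rays → ∑ v ∈ P, v = ∑ v ∈ Q, v → P = Q)
    (hQ : IsPrimitiveSet F' Q) : ∑ v ∈ Q, v = 0 ∨ ∑ v ∈ Q, v ∈ F'.rays := by
  obtain ⟨S, hS, hSP₀, -, hQS⟩ := h.exists_isPrimitiveSet_sum_eq hP₀ hρh hsum hQ
  rw [hQS, h.rays_eq, mem_erase]
  refine (hprim S hS).imp_right fun hSrays => ⟨fun hSρh => hSP₀ ?_, hSrays⟩
  exact huniq S P₀ hS hP₀ hSrays (hSρh.trans hsum.symm)

theorem eq_of_sum_eq (h : IsBlowDown F F' P₀ ρh) (hP₀ : IsPrimitiveSet F P₀)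
    (hρh : ρh ∈ F.rays) (hsum : ∑ v ∈ P₀, v = ρh)
    (huniq : ∀ P Q, IsPrimitiveSet F P → IsPrimitiveSet F Q →
      ∑ v ∈ P, v ∈ F.rays → ∑ v ∈ P, v = ∑ v ∈ Q, v → P = Q)
    {P : Finset (Fin n → ℤ)} (hP : IsPrimitiveSet F' P) (hQ : IsPrimitiveSet F' Q)
    (hPrays : ∑ v ∈ P, v ∈ F'.rays) (hPQ : ∑ v ∈ P, v = ∑ v ∈ Q, v) : P = Q := by
  obtain ⟨S, hS, -, rfl, hPS⟩ := h.exists_isPrimitiveSet_sum_eq hP₀ hρh hsum hP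
  obtain ⟨T, hT, -, rfl, hQT⟩ := h.exists_isPrimitiveSet_sum_eq hP₀ hρh hsum hQ
  have hSrays : ∑ v ∈ S, v ∈ F.rays := by
    rw [← hPS]
    exact mem_of_mem_erase (h.rays_eq ▸ hPrays)
  rw [huniq S T hS hT hSrays (hPS.symm.trans (hPQ.trans hQT))]

end IsBlowDown

/-- Sato's description of primitive sets under blow-down, used in
Proposition 3.9: let Δ satisfy: every primitive relation has right-hand side 0 or
a ray generator, each ray generator on the right of at most one primitive relation.
Let X → X' be the blow-down for the primitive relation Σ_{v∈P₀} v = ρ̂, with Δ'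
having rays Δ.rays ∖ {ρ̂} and cones as described. Then: (a)-type sets are primitive
for Δ'; every primitive set of Δ' is of type (a) or type (b) = (S∖{ρ̂}) ⊔ P₀ with
the same right-hand side; and Δ' again satisfies both hypotheses. -/
theorem stmt_18 (n : ℕ) (F F' : CompleteNonsingFan n)
    (hprim : ∀ P, IsPrimitiveSet F P → (∑ v ∈ P, v = 0 ∨ ∑ v ∈ P, v ∈ F.rays))
    (huniq : ∀ P Q, IsPrimitiveSet F P → IsPrimitiveSet F Q →
        ∑ v ∈ P, v ∈ F.rays → ∑ v ∈ P, v = ∑ v ∈ Q, v → P = Q)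
    (P₀ : Finset (Fin n → ℤ)) (ρh : Fin n → ℤ)
    (hP₀ : IsPrimitiveSet F P₀) (hρh : ρh ∈ F.rays) (hrelP₀ : ∑ v ∈ P₀, v = ρh)
    (hrays' : F'.rays = F.rays.erase ρh)
    (hcones' : ∀ σ : Finset (Fin n → ℤ), σ ∈ F'.cones ↔
        ((σ ∈ F.cones ∧ ρh ∉ σ) ∨ ∃ τ ∈ F.cones, ρh ∈ τ ∧ σ = (τ.erase ρh) ∪ P₀)) :
    (∀ Q, IsPrimitiveSet F Q → ρh ∉ Q → Q ≠ P₀ → IsPrimitiveSet F' Q) ∧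
    (∀ Q, IsPrimitiveSet F' Q →
        (IsPrimitiveSet F Q ∧ ρh ∉ Q ∧ Q ≠ P₀) ∨
        (∃ S, IsPrimitiveSet F S ∧ ρh ∈ S ∧ Disjoint (S.erase ρh) P₀ ∧
          Q = (S.erase ρh) ∪ P₀ ∧ ∑ v ∈ Q, v = ∑ v ∈ S, v)) ∧
    (∀ P, IsPrimitiveSet F' P → (∑ v ∈ P, v = 0 ∨ ∑ v ∈ P, v ∈ F'.rays)) ∧
    (∀ P Q, IsPrimitiveSet F' P → IsPrimitiveSet F' Q →
        ∑ v ∈ P, v ∈ F'.rays → ∑ v ∈ P, v = ∑ v ∈ Q, v → P = Q) := by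
  have h : IsBlowDown F F' P₀ ρh := ⟨hrays', hcones'⟩
  exact ⟨fun _ => h.isPrimitiveSet_of_isPrimitiveSet hP₀.2.1,
    fun _ => h.isPrimitiveSet_cases hP₀ hρh hrelP₀,
    fun _ => h.sum_eq_zero_or_mem_rays hP₀ hρh hrelP₀ hprim huniq,
    fun _ _ => h.eq_of_sum_eq hP₀ hρh hrelP₀ huniq⟩
end
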